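/- The agent anticipates inexcusable passive responsibility for ω under strategy σ and environment specification E if and only if σ is not best-effort for ¬ω under E. -/
import Mathlib

theorem inexcusable_passive_resp_ant_iff_not_best_effort {AS ES Play : Type*}
    (play : AS → ES → Play) (E : Set ES) (ω : Play → Prop)
    (dom : AS → AS → Prop)
    (hdom : ∀ σ1 σ2, dom σ1 σ2 ↔
      ∀ e ∈ E, ¬ ω (play σ2 e) → ¬ ω (play σ1 e))
    (σ : AS) :
    (∃ e ∈ E, ω (play σ e) ∧ ∃ σ' : AS, dom σ' σ ∧ ¬ ω (play σ' e)) ↔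
    ¬ (¬ ∃ σ' : AS, dom σ' σ ∧ ¬ dom σ σ') := by
  rw [not_not]
  constructor
  · rintro ⟨e, he, hω, σ', hd, hω'⟩
    refine ⟨σ', hd, fun h => ?_⟩
    exact (hdom σ σ').mp h e he hω' hω
  · rintro ⟨σ', hd, hnd⟩
    rw [hdom] at hnd
    push_neg at hnd
    obtain ⟨e, he, hω', hω⟩ := hnd
    exact ⟨e, he, hω, σ', hd, hω'⟩
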